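/- In a stochastic game, if a distribution d₀ is almost-sure winning for the reachability objective ◇T, then there exists a single memoryless player-1 strategy σ such that for all ε > 0 there exists h_ε ∈ ℕ with Pr^{σ,τ}_{d₀}(◇^{≤h_ε} T) ≥ 1 − ε for every player-2 strategy τ. -/

import Mathlib

open Finset

/-- A two-player stochastic game: transition kernel `δ q a b q'`. -/
structure Game (Q A : Type) where
  δ : Q → A → A → Q → ℝ

/-- Validity of the transition kernel: a probability distribution on `Q` for each `q,a,b`. -/
def IsGame {Q A : Type} [Fintype Q] (G : Game Q A) : Prop :=
  (∀ q a b q', 0 ≤ G.δ q a b q') ∧ (∀ q a b, (∑ q' : Q, G.δ q a b q') = 1)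

/-- A probability distribution over a finite set. -/
def IsDist {Q : Type} [Fintype Q] (d : Q → ℝ) : Prop :=
  (∀ q, 0 ≤ d q) ∧ (∑ q : Q, d q) = 1

/-- Randomized player-1 strategies: map (reversed) state histories to distributions on actions. -/
abbrev Strat1 (Q A : Type) := List Q → A → ℝ
/-- Randomized player-2 strategies: also see the action chosen by player 1. -/
abbrev Strat2 (Q A : Type) := List Q → A → A → ℝ

def IsStrat1 {Q A : Type} [Fintype A] (σ : Strat1 Q A) : Prop :=
  ∀ h, (∀ a, 0 ≤ σ h a) ∧ (∑ a : A, σ h a) = 1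

def IsStrat2 {Q A : Type} [Fintype A] (τ : Strat2 Q A) : Prop :=
  ∀ h a, (∀ b, 0 ≤ τ h a b) ∧ (∑ b : A, τ h a b) = 1

/-- Probability of a finite state history (in reverse chronological order:
the head is the current state), with the actions marginalized out. -/
def hprob {Q A : Type} [Fintype A] (G : Game Q A) (d0 : Q → ℝ)
    (σ : Strat1 Q A) (τ : Strat2 Q A) : List Q → ℝ
  | [] => 1
  | [q] => d0 q
  | q :: q' :: h =>
      (∑ a : A, ∑ b : A, σ (q' :: h) a * τ (q' :: h) a b * G.δ q' a b q) *
        hprob G d0 σ τ (q' :: h)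

/-- The outcome sequence of distributions: probability to be in state `q` after `i` rounds. -/
def outSeq {Q A : Type} [Fintype Q] [Fintype A] (G : Game Q A) (d0 : Q → ℝ)
    (σ : Strat1 Q A) (τ : Strat2 Q A) (i : ℕ) (q : Q) : ℝ :=
  ∑ h : Fin i → Q, hprob G d0 σ τ (q :: (List.ofFn h).reverse)

/-- Probability mass of a set of states. -/
def mass {Q : Type} (d : Q → ℝ) (T : Finset Q) : ℝ := ∑ q ∈ T, d q

/-- The four synchronizing modes, on a sequence of probability masses. -/
def AlwaysSync (m : ℕ → ℝ) (ε : ℝ) : Prop := ∀ i, 1 - ε ≤ m i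
def EventSync (m : ℕ → ℝ) (ε : ℝ) : Prop := ∃ i, 1 - ε ≤ m i
def WeaklySync (m : ℕ → ℝ) (ε : ℝ) : Prop := ∀ N, ∃ i, N ≤ i ∧ 1 - ε ≤ m i
def StronglySync (m : ℕ → ℝ) (ε : ℝ) : Prop := ∃ N, ∀ i, N ≤ i → 1 - ε ≤ m i

/-- Sure winning region for a synchronizing mode `sync`: some player-1 strategy ensures
`1`-synchronization against all player-2 strategies. -/
def SureWin {Q A : Type} [Fintype Q] [Fintype A] (G : Game Q A) (T : Finset Q)
    (sync : (ℕ → ℝ) → ℝ → Prop) : Set (Q → ℝ) :=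
  {d0 | IsDist d0 ∧ ∃ σ, IsStrat1 σ ∧ ∀ τ, IsStrat2 τ →
    sync (fun i => mass (outSeq G d0 σ τ i) T) 0}

/-- Almost-sure winning region for a synchronizing mode `sync`: some player-1 strategy
ensures `(1-ε)`-synchronization for all `ε > 0` against all player-2 strategies. -/
def ASWin {Q A : Type} [Fintype Q] [Fintype A] (G : Game Q A) (T : Finset Q)
    (sync : (ℕ → ℝ) → ℝ → Prop) : Set (Q → ℝ) :=
  {d0 | IsDist d0 ∧ ∃ σ, IsStrat1 σ ∧ ∀ τ, IsStrat2 τ →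
    ∀ ε : ℝ, 0 < ε → sync (fun i => mass (outSeq G d0 σ τ i) T) ε}

/-- Dirac distribution. -/
def dirac {Q : Type} [DecidableEq Q] (q : Q) : Q → ℝ := fun q' => if q' = q then 1 else 0

open Classical in
/-- Probability of reaching `T` within `i` steps: total probability of the length-`(i+1)`
state histories that visit `T`. -/
noncomputable def reachProb {Q A : Type} [Fintype Q] [Fintype A] (G : Game Q A)
    (d0 : Q → ℝ) (σ : Strat1 Q A) (τ : Strat2 Q A) (T : Finset Q) (i : ℕ) : ℝ :=
  ∑ h : Fin (i + 1) → Q,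
    if ∃ j, h j ∈ T then hprob G d0 σ τ (List.ofFn h).reverse else 0

/-- A memoryless player-1 strategy only depends on the current state (the head of the
reversed history). -/
def Memoryless1 {Q A : Type} (σ : Strat1 Q A) : Prop :=
  ∀ h h' : List Q, h.head? = h'.head? → σ h = σ h'

/-- A memoryless player-2 strategy only depends on the current state and the action
of player 1. -/
def Memoryless2 {Q A : Type} (τ : Strat2 Q A) : Prop :=
  ∀ (h h' : List Q) (a : A), h.head? = h'.head? → τ h a = τ h' a

/-!
The almost-sure winning region is the greatest fixed point `W = νY. μX. T ∪ Cpre(Y, X)`, where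
`Cpre(Y, X)` holds the states with an action that, against every reply, stays in `Y` and moves to
`X` with positive probability. Let `η` be the smallest positive transition probability.

A state outside `W` leaves the decreasing approximants of `W` at some level, and player 2 has a
positional reply that, whatever player 1 does, either lowers the level with probability at least
`η` or keeps the play outside `W` without raising it. Hence `T` is avoided forever with
probability at least `η ^ level`, so an almost-surely winning `d0` is supported in `W`.

Inside `W` the positional attractor strategy never leaves `W` and, from rank `r`, reaches `T`
within `r` rounds with probability at least `η ^ r`. If `K` bounds the ranks, the probability of
avoiding `T` for `K * j` rounds is at most `(1 - η ^ K) ^ j`, uniformly in player 2's strategy.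
-/

theorem sum_mixture_eq {ι κ : Type*} [Fintype ι] (s : Finset κ) (w : ι → ℝ) (p : ι → κ → ℝ)
    (g : κ → ℝ) : ∑ y ∈ s, (∑ c, w c * p c y) * g y = ∑ c, w c * ∑ y ∈ s, p c y * g y := by
  simp_rw [sum_mul, mul_sum, mul_assoc]
  exact sum_comm

theorem sum_mixture_le {ι κ : Type*} [Fintype ι] (s : Finset κ) {w : ι → ℝ} {p : ι → κ → ℝ}
    {g : κ → ℝ} {B : ℝ} (hw : ∀ c, 0 ≤ w c) (hw1 : ∑ c, w c = 1)
    (h : ∀ c, ∑ y ∈ s, p c y * g y ≤ B) : ∑ y ∈ s, (∑ c, w c * p c y) * g y ≤ B := by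
  rw [sum_mixture_eq]
  calc ∑ c, w c * ∑ y ∈ s, p c y * g y ≤ ∑ c, w c * B :=
        sum_le_sum fun c _ => mul_le_mul_of_nonneg_left (h c) (hw c)
    _ = B := by rw [← sum_mul, hw1, one_mul]

theorem le_sum_mixture {ι κ : Type*} [Fintype ι] (s : Finset κ) {w : ι → ℝ} {p : ι → κ → ℝ}
    {g : κ → ℝ} {B : ℝ} (hw : ∀ c, 0 ≤ w c) (hw1 : ∑ c, w c = 1)
    (h : ∀ c, B ≤ ∑ y ∈ s, p c y * g y) : B ≤ ∑ y ∈ s, (∑ c, w c * p c y) * g y := by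
  rw [sum_mixture_eq]
  calc B = ∑ c, w c * B := by rw [← sum_mul, hw1, one_mul]
    _ ≤ ∑ c, w c * ∑ y ∈ s, p c y * g y :=
        sum_le_sum fun c _ => mul_le_mul_of_nonneg_left (h c) (hw c)

theorem sum_mul_le_of_escape {κ : Type*} [Fintype κ] [DecidableEq κ] {s : Finset κ}
    {p g : κ → ℝ} {m c : ℝ} {x : κ} (hp : ∀ y, 0 ≤ p y) (hp1 : ∑ y, p y = 1)
    (hg : ∀ y ∈ s, 0 < p y → g y ≤ m) (hm : 0 ≤ m) (hc : c ≤ 1)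
    (hx : x ∈ s → g x ≤ (1 - c) * m) : ∑ y ∈ s, p y * g y ≤ (1 - p x * c) * m := by
  have hbound : ∀ y ∈ s, p y * g y ≤ p y * (m - if y = x then c * m else 0) := by
    intro y hy
    rcases (hp y).eq_or_lt with h0 | hpos
    · simp [← h0]
    refine mul_le_mul_of_nonneg_left ?_ (hp y)
    split_ifs with hyx
    · subst hyx; linarith [hx hy]
    · simpa using hg y hy hpos
  calc ∑ y ∈ s, p y * g y ≤ ∑ y ∈ s, p y * (m - if y = x then c * m else 0) := sum_le_sum hbound
    _ ≤ ∑ y, p y * (m - if y = x then c * m else 0) :=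
        sum_le_univ_sum_of_nonneg fun y => mul_nonneg (hp y) (by split_ifs <;> nlinarith)
    _ = (1 - p x * c) * m := by
        simp only [mul_sub, mul_ite, mul_zero, sum_sub_distrib, ← sum_mul, hp1, sum_ite_eq',
          mem_univ, if_true]
        ring

theorem exists_succ_eq_of_antitone {α : Type*} [PartialOrder α] [Finite α] {s : ℕ → α}
    (hs : Antitone s) : ∃ n, s (n + 1) = s n := by
  obtain ⟨m, n, hne, heq⟩ := Finite.exists_ne_map_eq_of_infinite s
  wlog hmn : m < n generalizing m n
  · exact this n m hne.symm heq.symm (lt_of_le_of_ne (not_lt.1 hmn) hne.symm)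
  exact ⟨m, le_antisymm (hs m.le_succ) (heq ▸ hs hmn)⟩

namespace Game

variable {Q A : Type}

section Paths

variable [Fintype A] (G : Game Q A) (d0 : Q → ℝ) (σ : Strat1 Q A) (τ : Strat2 Q A)

/-- The law of the next state given the history `l` (most recent state first); the initial
distribution `d0` is the law of the first state, given the empty history. -/
def nextProb : List Q → Q → ℝ
  | [], q' => d0 q'
  | q :: h, q' => ∑ a, ∑ b, σ (q :: h) a * τ (q :: h) a b * G.δ q a b q'

theorem hprob_cons (l : List Q) (q : Q) :
    hprob G d0 σ τ (q :: l) = G.nextProb d0 σ τ l q * hprob G d0 σ τ l := by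
  cases l <;> simp [hprob, nextProb]

variable {G σ τ}

theorem nonempty_of_isStrat1 (hσ : IsStrat1 σ) : Nonempty A := by
  by_contra h
  simpa [not_nonempty_iff.1 h] using (hσ []).2

variable [Fintype Q]

theorem nextProb_cons_nonneg (hG : IsGame G) (hσ : IsStrat1 σ) (hτ : IsStrat2 τ)
    (q : Q) (h : List Q) (q' : Q) : 0 ≤ G.nextProb d0 σ τ (q :: h) q' :=
  sum_nonneg fun a _ => sum_nonneg fun b _ =>
    mul_nonneg (mul_nonneg ((hσ _).1 a) ((hτ _ _).1 b)) (hG.1 _ _ _ _)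

theorem sum_nextProb_cons (hG : IsGame G) (hσ : IsStrat1 σ) (hτ : IsStrat2 τ)
    (q : Q) (h : List Q) : ∑ q', G.nextProb d0 σ τ (q :: h) q' = 1 := by
  simp_rw [nextProb, sum_comm (γ := Q), ← mul_sum, hG.2, mul_one, ← mul_sum, (hτ _ _).2,
    mul_one, (hσ _).2]

theorem sum_nextProb (hG : IsGame G) (hd0 : IsDist d0) (hσ : IsStrat1 σ) (hτ : IsStrat2 τ) :
    ∀ l, ∑ q', G.nextProb d0 σ τ l q' = 1
  | [] => hd0.2
  | q :: h => sum_nextProb_cons d0 hG hσ hτ q h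

variable (G σ τ) [DecidableEq Q]

def avoidProb (T : Finset Q) : ℕ → List Q → ℝ
  | 0, _ => 1
  | i + 1, l => ∑ q ∈ Tᶜ, G.nextProb d0 σ τ l q * avoidProb T i (q :: l)

theorem sum_hprob_avoid (T : Finset Q) : ∀ (i : ℕ) (l : List Q),
    ∑ e : Fin i → Q, (if ∀ j, e j ∉ T then hprob G d0 σ τ ((List.ofFn e).reverse ++ l) else 0)
      = hprob G d0 σ τ l * G.avoidProb d0 σ τ T i l
  | 0, l => by simp [avoidProb]
  | i + 1, l => by
    rw [← (Fin.consEquiv fun _ => Q).sum_comp, Fintype.sum_prod_type]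
    simp only [Fin.consEquiv, Equiv.coe_fn_mk, List.ofFn_succ, Fin.forall_fin_succ, Fin.cons_zero,
      Fin.cons_succ, List.reverse_cons, List.append_assoc, List.singleton_append, ite_and,
      sum_ite_irrel, sum_const_zero, sum_hprob_avoid T i, hprob_cons, avoidProb, mul_sum]
    rw [← sum_filter]
    exact sum_congr (by ext; simp) fun q _ => by ring

variable {G σ τ}

theorem avoidProb_empty (hG : IsGame G) (hd0 : IsDist d0) (hσ : IsStrat1 σ) (hτ : IsStrat2 τ) :
    ∀ i l, G.avoidProb d0 σ τ ∅ i l = 1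
  | 0, _ => rfl
  | i + 1, l => by
    simp [avoidProb, avoidProb_empty hG hd0 hσ hτ i, sum_nextProb d0 hG hd0 hσ hτ l]

theorem reachProb_add_avoidProb (hG : IsGame G) (hd0 : IsDist d0) (hσ : IsStrat1 σ)
    (hτ : IsStrat2 τ) (T : Finset Q) (i : ℕ) :
    reachProb G d0 σ τ T i + G.avoidProb d0 σ τ T (i + 1) [] = 1 := by
  have htotal := sum_hprob_avoid G d0 σ τ ∅ (i + 1) []
  have havoid := sum_hprob_avoid G d0 σ τ T (i + 1) []
  simp only [notMem_empty, not_false_eq_true, implies_true, if_true, List.append_nil, hprob,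
    one_mul, avoidProb_empty d0 hG hd0 hσ hτ] at htotal havoid
  rw [reachProb, ← htotal, ← havoid, ← sum_add_distrib]
  refine sum_congr rfl fun e _ => ?_
  by_cases h : ∃ j, e j ∈ T <;> simp_all

theorem avoidProb_cons_nonneg (hG : IsGame G) (hσ : IsStrat1 σ) (hτ : IsStrat2 τ)
    (T : Finset Q) : ∀ i q h, 0 ≤ G.avoidProb d0 σ τ T i (q :: h)
  | 0, _, _ => zero_le_one
  | i + 1, q, h => sum_nonneg fun q' _ => mul_nonneg (nextProb_cons_nonneg d0 hG hσ hτ q h q')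
      (avoidProb_cons_nonneg hG hσ hτ T i q' (q :: h))

theorem avoidProb_cons_antitone (hG : IsGame G) (hσ : IsStrat1 σ) (hτ : IsStrat2 τ)
    (T : Finset Q) (q : Q) (h : List Q) : Antitone fun i => G.avoidProb d0 σ τ T i (q :: h) := by
  suffices ∀ i q h, G.avoidProb d0 σ τ T (i + 1) (q :: h) ≤ G.avoidProb d0 σ τ T i (q :: h) from
    antitone_nat_of_succ_le fun i => this i q h
  intro i
  induction i with
  | zero =>
    intro q h
    simpa [avoidProb] using (sum_le_univ_sum_of_nonneg (nextProb_cons_nonneg d0 hG hσ hτ q h)).trans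
      (sum_nextProb_cons d0 hG hσ hτ q h).le
  | succ i ih =>
    intro q h
    exact sum_le_sum fun q' _ =>
      mul_le_mul_of_nonneg_left (ih q' (q :: h)) (nextProb_cons_nonneg d0 hG hσ hτ q h q')

theorem mul_avoidProb_le_one_sub_reachProb (hG : IsGame G) (hd0 : IsDist d0) (hσ : IsStrat1 σ)
    (hτ : IsStrat2 τ) {T : Finset Q} {q : Q} (hq : q ∉ T) (i : ℕ) :
    d0 q * G.avoidProb d0 σ τ T i [q] ≤ 1 - reachProb G d0 σ τ T i := by
  rw [← reachProb_add_avoidProb d0 hG hd0 hσ hτ T i, add_sub_cancel_left]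
  exact single_le_sum (f := fun q => d0 q * G.avoidProb d0 σ τ T i [q])
    (fun q' _ => mul_nonneg (hd0.1 q') (avoidProb_cons_nonneg d0 hG hσ hτ T i q' []))
    (mem_compl.2 hq)

theorem one_sub_le_reachProb (hG : IsGame G) (hd0 : IsDist d0) (hσ : IsStrat1 σ)
    (hτ : IsStrat2 τ) {T : Finset Q} {i : ℕ} {c : ℝ} (hc : 0 ≤ c)
    (h : ∀ q ∉ T, d0 q ≠ 0 → G.avoidProb d0 σ τ T i [q] ≤ c) :
    1 - c ≤ reachProb G d0 σ τ T i := by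
  have hbound : G.avoidProb d0 σ τ T (i + 1) [] ≤ c :=
    calc ∑ q ∈ Tᶜ, d0 q * G.avoidProb d0 σ τ T i [q]
        ≤ ∑ q ∈ Tᶜ, d0 q * c := sum_le_sum fun q hq => by
          rcases eq_or_ne (d0 q) 0 with h0 | h0
          · simp [h0]
          · exact mul_le_mul_of_nonneg_left (h q (mem_compl.1 hq) h0) (hd0.1 q)
      _ ≤ ∑ q, d0 q * c := sum_le_univ_sum_of_nonneg fun q => mul_nonneg (hd0.1 q) hc
      _ = c := by rw [← sum_mul, hd0.2, one_mul]
  linarith [reachProb_add_avoidProb d0 hG hd0 hσ hτ T i]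

end Paths

section Positional

variable [DecidableEq A]

def detStrat1 (α : Q → A) (a₀ : A) : Strat1 Q A :=
  fun h a => if a = h.head?.elim a₀ α then 1 else 0

def detStrat2 (β : Q → A → A) (b₀ : A) : Strat2 Q A :=
  fun h a b => if b = h.head?.elim b₀ (β · a) then 1 else 0

theorem detStrat1_cons (α : Q → A) (a₀ : A) (q : Q) (h : List Q) (a : A) :
    detStrat1 α a₀ (q :: h) a = if a = α q then 1 else 0 := rfl

theorem detStrat2_cons (β : Q → A → A) (b₀ : A) (q : Q) (h : List Q) (a b : A) :
    detStrat2 β b₀ (q :: h) a b = if b = β q a then 1 else 0 := rfl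

theorem memoryless1_detStrat1 (α : Q → A) (a₀ : A) : Memoryless1 (detStrat1 α a₀) :=
  fun _ _ hh => by unfold detStrat1; rw [hh]

variable [Fintype A]

theorem isStrat1_detStrat1 (α : Q → A) (a₀ : A) : IsStrat1 (detStrat1 α a₀) :=
  fun _ => ⟨fun _ => by unfold detStrat1; split_ifs <;> norm_num, by simp [detStrat1]⟩

theorem isStrat2_detStrat2 (β : Q → A → A) (b₀ : A) : IsStrat2 (detStrat2 β b₀) :=
  fun _ _ => ⟨fun _ => by unfold detStrat2; split_ifs <;> norm_num, by simp [detStrat2]⟩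

theorem nextProb_detStrat1 (G : Game Q A) (d0 : Q → ℝ) (α : Q → A) (a₀ : A) (τ : Strat2 Q A)
    (q : Q) (h : List Q) (q' : Q) :
    G.nextProb d0 (detStrat1 α a₀) τ (q :: h) q' = ∑ b, τ (q :: h) (α q) b * G.δ q (α q) b q' := by
  simp only [nextProb, detStrat1_cons, ite_mul, one_mul, zero_mul,
    sum_ite_irrel, sum_const_zero, sum_ite_eq', mem_univ, if_true]

theorem nextProb_detStrat2 (G : Game Q A) (d0 : Q → ℝ) (σ : Strat1 Q A) (β : Q → A → A) (b₀ : A)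
    (q : Q) (h : List Q) (q' : Q) :
    G.nextProb d0 σ (detStrat2 β b₀) (q :: h) q' = ∑ a, σ (q :: h) a * G.δ q a (β q a) q' := by
  simp only [nextProb, detStrat2_cons, mul_ite, mul_one, mul_zero,
    ite_mul, zero_mul, sum_ite_eq', mem_univ, if_true]

end Positional

def IsRankedAttractor (G : Game Q A) (T W : Finset Q) (α : Q → A) (rank : Q → ℕ) : Prop :=
  ∀ q ∈ W, q ∉ T → ∀ b, (∀ q', 0 < G.δ q (α q) b q' → q' ∈ W) ∧
    ∃ q', 0 < G.δ q (α q) b q' ∧ (q' ∈ T ∨ rank q' < rank q)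

def IsRankedTrap (G : Game Q A) (T L : Finset Q) (β : Q → A → A) (lvl : Q → ℕ) : Prop :=
  ∀ q ∈ L, q ∉ T ∧ ∀ a, (∃ q' ∈ L, 0 < G.δ q a (β q a) q' ∧ lvl q' < lvl q) ∨
    ∀ q', 0 < G.δ q a (β q a) q' → q' ∈ L ∧ lvl q' ≤ lvl q

section Bounds

variable [Fintype Q] [Fintype A] [DecidableEq Q] [DecidableEq A] {G : Game Q A} {d0 : Q → ℝ}
  {T : Finset Q} {η : ℝ}

theorem avoidProb_detStrat1_le_of_rank_lt {W : Finset Q} {α : Q → A} {rank : Q → ℕ} {a₀ : A}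
    {τ : Strat2 Q A} (hG : IsGame G) (hτ : IsStrat2 τ) (hα : G.IsRankedAttractor T W α rank)
    (hη0 : 0 ≤ η) (hη1 : η ≤ 1) (hη : ∀ q a b q', 0 < G.δ q a b q' → η ≤ G.δ q a b q')
    {i : ℕ} {m : ℝ} (hm : 0 ≤ m)
    (hi : ∀ q ∈ W, q ∉ T → ∀ h, G.avoidProb d0 (detStrat1 α a₀) τ T i (q :: h) ≤ m) :
    ∀ r, ∀ q ∈ W, q ∉ T → rank q < r → ∀ h,
      G.avoidProb d0 (detStrat1 α a₀) τ T (r + i) (q :: h) ≤ (1 - η ^ r) * m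
  | 0, _, _, _, hr, _ => absurd hr (Nat.not_lt_zero _)
  | r + 1, q, hq, hqT, hr, h => by
    have hσ := isStrat1_detStrat1 α a₀
    rw [show r + 1 + i = r + i + 1 by ring, avoidProb]
    simp_rw [nextProb_detStrat1]
    refine sum_mixture_le _ (hτ _ _).1 (hτ _ _).2 fun b => ?_
    obtain ⟨hsafe, x, hx, hxT⟩ := hα q hq hqT b
    have hmono : ∀ y ∈ Tᶜ, 0 < G.δ q (α q) b y →
        G.avoidProb d0 (detStrat1 α a₀) τ T (r + i) (y :: q :: h) ≤ m := fun y hy hpos =>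
      (avoidProb_cons_antitone d0 hG hσ hτ T y _ (Nat.le_add_left i r)).trans
        (hi y (hsafe y hpos) (mem_compl.1 hy) _)
    have hdrop : x ∈ Tᶜ →
        G.avoidProb d0 (detStrat1 α a₀) τ T (r + i) (x :: q :: h) ≤ (1 - η ^ r) * m := fun hxs =>
      avoidProb_detStrat1_le_of_rank_lt hG hτ hα hη0 hη1 hη hm hi r x (hsafe x hx)
        (mem_compl.1 hxs) (by have := hxT.resolve_left (mem_compl.1 hxs); omega) _
    calc _ ≤ (1 - G.δ q (α q) b x * η ^ r) * m :=
          sum_mul_le_of_escape (hG.1 q _ b) (hG.2 q _ b) hmono hm (pow_le_one₀ hη0 hη1) hdrop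
      _ ≤ (1 - η ^ (r + 1)) * m := by
          rw [pow_succ']
          gcongr
          exact hη _ _ _ _ hx

theorem avoidProb_detStrat1_le_pow {W : Finset Q} {α : Q → A} {rank : Q → ℕ} {a₀ : A}
    {τ : Strat2 Q A} (hG : IsGame G) (hτ : IsStrat2 τ) (hα : G.IsRankedAttractor T W α rank)
    (hη0 : 0 ≤ η) (hη1 : η ≤ 1) (hη : ∀ q a b q', 0 < G.δ q a b q' → η ≤ G.δ q a b q')
    {K : ℕ} (hK : ∀ q, rank q < K) :
    ∀ j, ∀ q ∈ W, q ∉ T → ∀ h,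
      G.avoidProb d0 (detStrat1 α a₀) τ T (K * j) (q :: h) ≤ (1 - η ^ K) ^ j
  | 0, _, _, _, _ => by simp [avoidProb]
  | j + 1, q, hq, hqT, h => by
    rw [Nat.mul_succ, add_comm, pow_succ']
    exact avoidProb_detStrat1_le_of_rank_lt hG hτ hα hη0 hη1 hη
      (pow_nonneg (sub_nonneg.2 (pow_le_one₀ hη0 hη1)) j)
      (avoidProb_detStrat1_le_pow hG hτ hα hη0 hη1 hη hK j) K q hq hqT (hK q) h

theorem pow_le_avoidProb_detStrat2 {L : Finset Q} {β : Q → A → A} {lvl : Q → ℕ} {b₀ : A}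
    {σ : Strat1 Q A} (hG : IsGame G) (hσ : IsStrat1 σ) (hβ : G.IsRankedTrap T L β lvl)
    (hη0 : 0 ≤ η) (hη1 : η ≤ 1) (hη : ∀ q a b q', 0 < G.δ q a b q' → η ≤ G.δ q a b q') :
    ∀ i, ∀ q ∈ L, ∀ h, η ^ lvl q ≤ G.avoidProb d0 σ (detStrat2 β b₀) T i (q :: h)
  | 0, _, _, _ => pow_le_one₀ hη0 hη1
  | i + 1, q, hq, h => by
    have ih : ∀ q ∈ L, ∀ h, η ^ lvl q ≤ G.avoidProb d0 σ (detStrat2 β b₀) T i (q :: h) :=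
      pow_le_avoidProb_detStrat2 hG hσ hβ hη0 hη1 hη i
    have hτ := isStrat2_detStrat2 β b₀
    rw [avoidProb]
    simp_rw [nextProb_detStrat2]
    refine le_sum_mixture _ (hσ _).1 (hσ _).2 fun a => ?_
    rcases (hβ q hq).2 a with ⟨x, hxL, hpos, hlt⟩ | hstay
    · calc η ^ lvl q ≤ η * η ^ lvl x := by rw [← pow_succ']; exact pow_le_pow_of_le_one hη0 hη1 hlt
        _ ≤ G.δ q a (β q a) x * G.avoidProb d0 σ (detStrat2 β b₀) T i (x :: q :: h) :=
          mul_le_mul (hη _ _ _ _ hpos) (ih x hxL _) (pow_nonneg hη0 _) (hG.1 _ _ _ _)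
        _ ≤ ∑ y ∈ Tᶜ, G.δ q a (β q a) y * G.avoidProb d0 σ (detStrat2 β b₀) T i (y :: q :: h) :=
          single_le_sum (fun y _ => mul_nonneg (hG.1 q a (β q a) y)
            (avoidProb_cons_nonneg d0 hG hσ hτ T i y (q :: h))) (mem_compl.2 (hβ x hxL).1)
    · have hmass : ∑ y ∈ Tᶜ, G.δ q a (β q a) y = 1 := by
        rw [← hG.2 q a (β q a)]
        refine sum_subset (subset_univ _) fun y _ hy => ?_
        by_contra hne
        exact (hβ y (hstay y ((hG.1 _ _ _ _).lt_of_ne' hne)).1).1 (by simpa using hy)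
      calc η ^ lvl q = ∑ y ∈ Tᶜ, G.δ q a (β q a) y * η ^ lvl q := by rw [← sum_mul, hmass, one_mul]
        _ ≤ _ := sum_le_sum fun y _ => by
          rcases (hG.1 q a (β q a) y).eq_or_lt with h0 | hpos
          · simp [← h0]
          · exact mul_le_mul_of_nonneg_left ((pow_le_pow_of_le_one hη0 hη1 (hstay y hpos).2).trans
              (ih y (hstay y hpos).1 _)) (hG.1 _ _ _ _)

theorem dist_eq_zero_of_isRankedTrap {L : Finset Q} {β : Q → A → A} {lvl : Q → ℕ} (b₀ : A)
    {σ : Strat1 Q A} (hG : IsGame G) (hd0 : IsDist d0) (hσ : IsStrat1 σ)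
    (hwin : ∀ τ, IsStrat2 τ → ∀ ε : ℝ, 0 < ε → ∃ i, 1 - ε ≤ reachProb G d0 σ τ T i)
    (hβ : G.IsRankedTrap T L β lvl)
    (hη0 : 0 < η) (hη1 : η ≤ 1) (hη : ∀ q a b q', 0 < G.δ q a b q' → η ≤ G.δ q a b q') :
    ∀ q ∈ L, d0 q = 0 := by
  intro q hq
  by_contra hne
  have hpos : 0 < d0 q * η ^ lvl q := mul_pos ((hd0.1 q).lt_of_ne' hne) (pow_pos hη0 _)
  obtain ⟨i, hi⟩ := hwin _ (isStrat2_detStrat2 β b₀) _ (half_pos hpos)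
  have hlow := (mul_le_mul_of_nonneg_left
    (pow_le_avoidProb_detStrat2 hG hσ hβ hη0.le hη1 hη i q hq []) (hd0.1 q)).trans
    (mul_avoidProb_le_one_sub_reachProb d0 hG hd0 hσ (isStrat2_detStrat2 β b₀) (hβ q hq).1 i)
  linarith

end Bounds

section Fixpoint

variable [Fintype Q] [Fintype A] [DecidableEq Q] (G : Game Q A) (T : Finset Q)

noncomputable def cpre (Y X : Finset Q) : Finset Q :=
  {q | ∃ a, ∀ b, (∀ q', 0 < G.δ q a b q' → q' ∈ Y) ∧ ∃ q' ∈ X, 0 < G.δ q a b q'}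

noncomputable def attr (Y : Finset Q) : ℕ → Finset Q
  | 0 => ∅
  | k + 1 => T ∪ G.cpre Y (attr Y k)

open Classical in
noncomputable def posAttr (Y : Finset Q) : Finset Q := {q | ∃ k, q ∈ G.attr T Y k}

noncomputable def winApprox : ℕ → Finset Q
  | 0 => univ
  | m + 1 => G.posAttr T (winApprox m)

open Classical in
noncomputable def attrRank (Y : Finset Q) (q : Q) : ℕ :=
  if h : ∃ k, q ∈ G.attr T Y k then Nat.find h else 0

open Classical in
/-- The last `m` with `q ∈ winApprox G T m`, for `q` outside some `winApprox G T m`. -/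
noncomputable def exitLevel (q : Q) : ℕ :=
  if h : ∃ m, q ∉ G.winApprox T (m + 1) then Nat.find h else 0

variable {G T} {Y Y' X X' : Finset Q} {q : Q}

theorem mem_cpre : q ∈ G.cpre Y X ↔
    ∃ a, ∀ b, (∀ q', 0 < G.δ q a b q' → q' ∈ Y) ∧ ∃ q' ∈ X, 0 < G.δ q a b q' := by
  simp [cpre]

theorem mem_posAttr : q ∈ G.posAttr T Y ↔ ∃ k, q ∈ G.attr T Y k := by
  simp [posAttr]

theorem cpre_mono (hY : Y ⊆ Y') (hX : X ⊆ X') : G.cpre Y X ⊆ G.cpre Y' X' := by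
  intro q hq
  obtain ⟨a, ha⟩ := mem_cpre.1 hq
  refine mem_cpre.2 ⟨a, fun b => ⟨fun q' hq' => hY ((ha b).1 q' hq'), ?_⟩⟩
  obtain ⟨q', hq'X, hpos⟩ := (ha b).2
  exact ⟨q', hX hq'X, hpos⟩

theorem attr_monotone (Y : Finset Q) : Monotone (G.attr T Y) := by
  refine monotone_nat_of_le_succ fun k => ?_
  induction k with
  | zero => exact empty_subset _
  | succ k ih => exact union_subset_union subset_rfl (cpre_mono subset_rfl ih)

theorem attr_mono_left (hY : Y ⊆ Y') : ∀ k, G.attr T Y k ⊆ G.attr T Y' k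
  | 0 => subset_rfl
  | k + 1 => union_subset_union subset_rfl (cpre_mono hY (attr_mono_left hY k))

theorem posAttr_mono (hY : Y ⊆ Y') : G.posAttr T Y ⊆ G.posAttr T Y' := by
  intro q hq
  obtain ⟨k, hk⟩ := mem_posAttr.1 hq
  exact mem_posAttr.2 ⟨k, attr_mono_left hY k hk⟩

/-- Finitely many replies `b` each need finitely many steps, so a bounded number suffices. -/
theorem cpre_posAttr_subset : G.cpre Y (G.posAttr T Y) ⊆ G.posAttr T Y := by
  intro q hq
  obtain ⟨a, ha⟩ := mem_cpre.1 hq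
  choose hsafe q' hq' hpos using ha
  choose k hk using fun b => mem_posAttr.1 (hq' b)
  refine mem_posAttr.2 ⟨univ.sup k + 1, mem_union_right _ (mem_cpre.2 ⟨a, fun b => ?_⟩)⟩
  exact ⟨hsafe b, q' b, attr_monotone Y (le_sup (mem_univ b)) (hk b), hpos b⟩

theorem exists_reply_of_notMem_posAttr (hq : q ∉ G.posAttr T Y) :
    q ∉ T ∧ ∀ a, ∃ b, (∀ q', 0 < G.δ q a b q' → q' ∈ Y) →
      ∀ q', 0 < G.δ q a b q' → q' ∉ G.posAttr T Y := by
  refine ⟨fun hT => hq (mem_posAttr.2 ⟨1, mem_union_left _ hT⟩), fun a => ?_⟩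
  have hcpre : q ∉ G.cpre Y (G.posAttr T Y) := fun h => hq (cpre_posAttr_subset h)
  simp only [mem_cpre, not_exists, not_forall, not_and] at hcpre
  obtain ⟨b, hb⟩ := hcpre a
  exact ⟨b, fun hsafe q' hpos hq' => hb hsafe q' hq' hpos⟩

theorem winApprox_antitone : Antitone (G.winApprox T) := by
  refine antitone_nat_of_succ_le fun m => ?_
  induction m with
  | zero => exact subset_univ _
  | succ m ih => exact posAttr_mono ih

theorem attrRank_le {k : ℕ} (h : q ∈ G.attr T Y k) : G.attrRank T Y q ≤ k := by
  rw [attrRank, dif_pos ⟨k, h⟩]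
  exact Nat.find_le h

theorem mem_attr_attrRank (h : q ∈ G.posAttr T Y) : q ∈ G.attr T Y (G.attrRank T Y q) := by
  have h' := mem_posAttr.1 h
  rw [attrRank, dif_pos h']
  exact Nat.find_spec h'

theorem exitLevel_le {m : ℕ} (h : q ∉ G.winApprox T (m + 1)) : G.exitLevel T q ≤ m := by
  rw [exitLevel, dif_pos ⟨m, h⟩]
  exact Nat.find_le h

theorem notMem_winApprox_exitLevel_succ {m : ℕ} (h : q ∉ G.winApprox T (m + 1)) :
    q ∉ G.winApprox T (G.exitLevel T q + 1) := by
  have h' : ∃ m, q ∉ G.winApprox T (m + 1) := ⟨m, h⟩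
  rw [exitLevel, dif_pos h']
  exact Nat.find_spec h'

theorem exists_isRankedAttractor [Nonempty A] {W : Finset Q} (hW : W ⊆ G.posAttr T W) :
    ∃ α : Q → A, G.IsRankedAttractor T W α (G.attrRank T W) := by
  have hmove : ∀ q, ∃ a, q ∈ W → q ∉ T → ∀ b, (∀ q', 0 < G.δ q a b q' → q' ∈ W) ∧
      ∃ q', 0 < G.δ q a b q' ∧ (q' ∈ T ∨ G.attrRank T W q' < G.attrRank T W q) := by
    intro q
    by_cases hq : q ∈ W ∧ q ∉ T
    · have hr := mem_attr_attrRank (hW hq.1)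
      obtain ⟨k, hk⟩ : ∃ k, G.attrRank T W q = k + 1 :=
        Nat.exists_eq_succ_of_ne_zero fun h0 => by simp [h0, attr] at hr
      rw [hk, attr, mem_union, or_iff_right hq.2] at hr
      obtain ⟨a, ha⟩ := mem_cpre.1 hr
      refine ⟨a, fun _ _ b => ⟨(ha b).1, ?_⟩⟩
      obtain ⟨q', hq', hpos⟩ := (ha b).2
      exact ⟨q', hpos, Or.inr (hk ▸ Nat.lt_succ_of_le (attrRank_le hq'))⟩
    · exact ⟨Classical.arbitrary A, fun h1 h2 => absurd ⟨h1, h2⟩ hq⟩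
  choose α hα using hmove
  exact ⟨α, fun q hq hqT => hα q hq hqT⟩

theorem exists_isRankedTrap [Nonempty A] (M : ℕ) :
    ∃ β : Q → A → A, G.IsRankedTrap T (G.winApprox T M)ᶜ β (G.exitLevel T) := by
  have hreply : ∀ q a, ∃ b, q ∉ G.winApprox T M →
      (∃ q' ∈ (G.winApprox T M)ᶜ, 0 < G.δ q a b q' ∧ G.exitLevel T q' < G.exitLevel T q) ∨
      ∀ q', 0 < G.δ q a b q' → q' ∈ (G.winApprox T M)ᶜ ∧ G.exitLevel T q' ≤ G.exitLevel T q := by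
    intro q a
    by_cases hq : q ∈ G.winApprox T M
    · exact ⟨Classical.arbitrary A, fun h => absurd hq h⟩
    obtain ⟨M', rfl⟩ : ∃ M', M = M' + 1 :=
      Nat.exists_eq_succ_of_ne_zero fun h0 => hq (h0 ▸ mem_univ q)
    have hn := exitLevel_le hq
    obtain ⟨b, hb⟩ := (exists_reply_of_notMem_posAttr (notMem_winApprox_exitLevel_succ hq)).2 a
    refine ⟨b, fun _ => ?_⟩
    by_cases hsafe : ∀ q', 0 < G.δ q a b q' → q' ∈ G.winApprox T (G.exitLevel T q)
    · refine Or.inr fun q' hpos => ?_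
      have hq' : q' ∉ G.winApprox T (G.exitLevel T q + 1) := hb hsafe q' hpos
      exact ⟨mem_compl.2 fun h => hq' (winApprox_antitone (by omega) h), exitLevel_le hq'⟩
    · simp only [not_forall] at hsafe
      obtain ⟨q', hpos, hq'⟩ := hsafe
      obtain ⟨k, hk⟩ : ∃ k, G.exitLevel T q = k + 1 :=
        Nat.exists_eq_succ_of_ne_zero fun h0 => hq' (h0 ▸ mem_univ q')
      refine Or.inl ⟨q', mem_compl.2 fun h => hq' (winApprox_antitone (by omega) h), hpos, ?_⟩
      rw [hk] at hq' ⊢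
      exact Nat.lt_succ_of_le (exitLevel_le hq')
  choose β hβ using hreply
  refine ⟨β, fun q hq => ⟨?_, fun a => hβ q a (mem_compl.1 hq)⟩⟩
  obtain ⟨m, hm⟩ : ∃ m, q ∉ G.winApprox T (m + 1) := by
    rcases M with _ | m
    · exact absurd (mem_univ q) (mem_compl.1 hq)
    · exact ⟨m, mem_compl.1 hq⟩
  exact (exists_reply_of_notMem_posAttr hm).1

end Fixpoint

theorem exists_pos_le_pos_delta [Fintype Q] [Fintype A] (G : Game Q A) :
    ∃ η : ℝ, 0 < η ∧ η ≤ 1 ∧ ∀ q a b q', 0 < G.δ q a b q' → η ≤ G.δ q a b q' := by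
  classical
  let S : Finset ℝ := insert 1 ((univ.image fun x : Q × A × A × Q =>
    G.δ x.1 x.2.1 x.2.2.1 x.2.2.2).filter (0 < ·))
  have hS : S.Nonempty := insert_nonempty _ _
  refine ⟨S.min' hS, (lt_min'_iff S hS).2 fun y hy => ?_, min'_le S 1 (mem_insert_self _ _),
    fun q a b q' h => min'_le S _ ?_⟩
  · simp only [S, mem_insert, mem_filter] at hy
    rcases hy with rfl | ⟨_, hy⟩
    exacts [one_pos, hy]
  · simp only [S, mem_insert, mem_filter, mem_image, mem_univ, true_and]
    exact Or.inr ⟨⟨(q, a, b, q'), rfl⟩, h⟩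

end Game

open Game

theorem as_reach_memoryless_uniform {Q A : Type} [Fintype Q] [Fintype A]
    (G : Game Q A) (hG : IsGame G) (T : Finset Q) (d0 : Q → ℝ) (hd0 : IsDist d0)
    (hAS : ∃ σ, IsStrat1 σ ∧ ∀ τ, IsStrat2 τ →
        ∀ ε : ℝ, 0 < ε → ∃ i, 1 - ε ≤ reachProb G d0 σ τ T i) :
    ∃ σ, IsStrat1 σ ∧ Memoryless1 σ ∧
      ∀ ε : ℝ, 0 < ε → ∃ hε : ℕ, ∀ τ, IsStrat2 τ →
        1 - ε ≤ reachProb G d0 σ τ T hε := by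
  classical
  obtain ⟨σ₀, hσ₀, hwin⟩ := hAS
  have := nonempty_of_isStrat1 hσ₀
  obtain ⟨η, hη0, hη1, hη⟩ := G.exists_pos_le_pos_delta
  obtain ⟨M, hM⟩ := exists_succ_eq_of_antitone (winApprox_antitone (G := G) (T := T))
  obtain ⟨β, hβ⟩ := exists_isRankedTrap (G := G) (T := T) M
  have hsupp := dist_eq_zero_of_isRankedTrap (Classical.arbitrary A) hG hd0 hσ₀ hwin hβ hη0 hη1 hη
  obtain ⟨α, hα⟩ := exists_isRankedAttractor hM.symm.subset
  obtain ⟨K, hK⟩ : ∃ K, ∀ q, G.attrRank T (G.winApprox T M) q < K :=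
    ⟨univ.sup _ + 1, fun q => Nat.lt_succ_of_le (le_sup (mem_univ q))⟩
  refine ⟨detStrat1 α (Classical.arbitrary A), isStrat1_detStrat1 _ _, memoryless1_detStrat1 _ _,
    fun ε hε => ?_⟩
  obtain ⟨j, hj⟩ := exists_pow_lt_of_lt_one hε (sub_lt_self 1 (pow_pos hη0 K))
  refine ⟨K * j, fun τ hτ => (sub_le_sub_left hj.le 1).trans ?_⟩
  refine one_sub_le_reachProb d0 hG hd0 (isStrat1_detStrat1 _ _) hτ
    (pow_nonneg (sub_nonneg.2 (pow_le_one₀ hη0.le hη1)) j) fun q hqT hq0 => ?_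
  have hqW : q ∈ G.winApprox T M := by_contra fun h => hq0 (hsupp q (mem_compl.2 h))
  exact avoidProb_detStrat1_le_pow hG hτ hα hη0.le hη1 hη hK j q hqW hqT []
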